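/- Let d ≥ 3, let ψ be a d-monotone Archimedean generator and let γ be its Williamson measure. Then for every z > 0: (−1)^{d−2} D^−ψ^{(d−2)}(z) = −(d−1)! · ∫_{(0,1/z]} t^{d−1} dγ(t); in particular (−1)^{d−2} D^−ψ^{(d−2)}(z) ≤ 0, i.e. (−1)^{d−1} D^−ψ^{(d−2)}(z) = (d−1)! · ∫_{(0,1/z]} t^{d−1} dγ(t) ≥ 0. -/

import Mathlib

open MeasureTheory Set Filter Topology
open scoped ENNReal NNReal Classical

noncomputable section

/-- Extension of a generator `ψ` to `[0,∞]` with the convention `ψ(∞) := 0`. -/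
def psiExt (ψ : ℝ → ℝ) (z : ℝ≥0∞) : ℝ := if z = ∞ then 0 else ψ z.toReal

/-- The pseudo-inverse `φ(y) = inf {z ∈ [0,∞] : ψ(z) = y}` of a generator. -/
def pseudoInv (ψ : ℝ → ℝ) (y : ℝ) : ℝ≥0∞ := sInf {z : ℝ≥0∞ | psiExt ψ z = y}

/-- An Archimedean generator: `ψ : [0,∞) → [0,1]` is continuous, non-increasing,
satisfies `ψ 0 = 1` and `ψ(z) → 0` as `z → ∞`, and is strictly decreasing on
`[0, inf {z ∈ [0,∞] : ψ z = 0}]`. -/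
structure IsGenerator (ψ : ℝ → ℝ) : Prop where
  continuousOn : ContinuousOn ψ (Ici 0)
  mem_Icc : ∀ z : ℝ, 0 ≤ z → ψ z ∈ Icc (0 : ℝ) 1
  map_zero : ψ 0 = 1
  tendsto_atTop : Tendsto ψ atTop (𝓝 0)
  antitoneOn : AntitoneOn ψ (Ici 0)
  strictAnti : ∀ ⦃x y : ℝ⦄, 0 ≤ x → x < y → ENNReal.ofReal y ≤ pseudoInv ψ 0 → ψ y < ψ x

/-- The left-hand derivative `D⁻f`. -/
def leftDeriv (f : ℝ → ℝ) (z : ℝ) : ℝ := derivWithin f (Iio z) z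

/-- The right-hand derivative `D⁺f`. -/
def rightDeriv (f : ℝ → ℝ) (z : ℝ) : ℝ := derivWithin f (Ioi z) z

/-- A `d`-monotone Archimedean generator: the derivatives `ψ⁽ᵏ⁾` exist on `(0,∞)` for
`k = 1,…,d-2`, and `(-1)^(d-2) · ψ^(d-2)` is non-negative, non-increasing and convex
on `(0,∞)`. -/
structure IsdMonotoneGenerator (d : ℕ) (ψ : ℝ → ℝ) : Prop where
  toIsGenerator : IsGenerator ψ
  differentiable : ∀ k : ℕ, k < d - 2 → ∀ z : ℝ, 0 < z → DifferentiableAt ℝ (deriv^[k] ψ) z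
  nonneg : ∀ z : ℝ, 0 < z → 0 ≤ (-1 : ℝ) ^ (d - 2) * deriv^[d - 2] ψ z
  antitoneOn : AntitoneOn (fun z => (-1 : ℝ) ^ (d - 2) * deriv^[d - 2] ψ z) (Ioi 0)
  convexOn : ConvexOn ℝ (Ioi 0) (fun z => (-1 : ℝ) ^ (d - 2) * deriv^[d - 2] ψ z)

/-- The `d`-dimensional Archimedean copula generated by `ψ`:
`C_ψ(x) = ψ(φ(x₁) + ⋯ + φ(x_d))` (with `ψ(∞) := 0`). -/
def archCopula (d : ℕ) (ψ : ℝ → ℝ) (x : Fin d → ℝ) : ℝ :=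
  psiExt ψ (∑ i, pseudoInv ψ (x i))

/-- A generator is strict if `ψ(z) > 0` for all `z ≥ 0`. -/
def IsStrictGenerator (ψ : ℝ → ℝ) : Prop := ∀ z : ℝ, 0 ≤ z → 0 < ψ z

/-- The level set `L_t = {x ∈ [0,1]^d : C_ψ(x) = t}`. -/
def levelSet (d : ℕ) (ψ : ℝ → ℝ) (t : ℝ) : Set (Fin d → ℝ) :=
  {x | (∀ i, x i ∈ Icc (0 : ℝ) 1) ∧ archCopula d ψ x = t}

/-- The Williamson transform `(W_d γ)(z) = ∫ (1 - tz)₊^(d-1) dγ(t)`. -/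
def williamson (d : ℕ) (γ : Measure ℝ) (z : ℝ) : ℝ :=
  ∫ t, max (1 - t * z) 0 ^ (d - 1) ∂γ

/-- The class `P_{W_d}`: Borel probability measures on `[0,∞)` with `γ({0}) = 0` and
`∫_{[0,1]} (1-t)^(d-1) dγ(t) = 1/2`. -/
def memPW (d : ℕ) (γ : Measure ℝ) : Prop :=
  IsProbabilityMeasure γ ∧ γ (Iio 0) = 0 ∧ γ {0} = 0 ∧
    ∫ t in Icc (0 : ℝ) 1, (1 - t) ^ (d - 1) ∂γ = 1 / 2

/-!
Differentiating under the integral sign gives, for `k ≤ d - 2` and `x > 0`,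
`ψ⁽ᵏ⁾(x) = (-1)ᵏ (d-1)!/(d-1-k)! ∫ tᵏ (1 - t x)₊^(d-1-k) dγ(t)`: as long as the exponent of
`(1 - t x)₊` is at least `2`, the integrand is `C¹` in `x` with derivative bounded uniformly in
`t ≥ 0` for `x` near `z > 0`. At `k = d - 2` the kernel `(1 - t x)₊` is only Lipschitz, but its
left derivative in `x` at `z` is `-t · 1{t ≤ 1/z}`, and its left difference quotients near `z`
are dominated by a constant, so dominated convergence gives the left derivative of `ψ^(d-2)`.
-/

section WilliamsonMoment

variable {γ : Measure ℝ} {m : ℕ} {t x z : ℝ}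

def williamsonMoment (γ : Measure ℝ) (k m : ℕ) (x : ℝ) : ℝ :=
  ∫ t, t ^ k * max (1 - t * x) 0 ^ m ∂γ

lemma williamson_eq_williamsonMoment (d : ℕ) (γ : Measure ℝ) :
    williamson d γ = williamsonMoment γ 0 (d - 1) := by
  ext x
  simp [williamson, williamsonMoment]

lemma pow_mul_max_one_sub_mul_pow_le (ht : 0 ≤ t) (hx : 0 < x) (k : ℕ) (hm : m ≠ 0) :
    t ^ k * max (1 - t * x) 0 ^ m ≤ x⁻¹ ^ k := by
  rcases le_or_gt (t * x) 1 with htx | htx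
  · calc t ^ k * max (1 - t * x) 0 ^ m ≤ x⁻¹ ^ k * 1 := by
          gcongr
          · rw [← one_div, le_div_iff₀ hx]
            exact htx
          · exact pow_le_one₀ (le_max_right _ _) (max_le (by nlinarith) zero_le_one)
      _ = x⁻¹ ^ k := mul_one _
  · rw [max_eq_right (by linarith), zero_pow hm, mul_zero]
    positivity

lemma integrable_pow_mul_max_one_sub_mul_pow [IsFiniteMeasure γ] (hγ : ∀ᵐ t ∂γ, 0 ≤ t)
    (k : ℕ) (hm : m ≠ 0) (hx : 0 < x) :
    Integrable (fun t => t ^ k * max (1 - t * x) 0 ^ m) γ := by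
  refine (integrable_const (x⁻¹ ^ k)).mono' (by fun_prop : Continuous _).aestronglyMeasurable ?_
  filter_upwards [hγ] with t ht
  rw [Real.norm_of_nonneg (by positivity)]
  exact pow_mul_max_one_sub_mul_pow_le ht hx k hm

lemma hasDerivAt_max_zero_pow (hm : 2 ≤ m) (u : ℝ) :
    HasDerivAt (fun u : ℝ => max u 0 ^ m) (m * max u 0 ^ (m - 1)) u := by
  refine hasDerivAt_of_hasDerivAt_of_ne' (f := fun u : ℝ => max u 0 ^ m)
    (g := fun u : ℝ => m * max u 0 ^ (m - 1)) (x := 0) (fun v hv => ?_)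
    (by fun_prop : Continuous fun u : ℝ => max u 0 ^ m).continuousAt
    (by fun_prop : Continuous fun u : ℝ => (m : ℝ) * max u 0 ^ (m - 1)).continuousAt u
  rcases hv.lt_or_gt with hv | hv
  · have hzero : (fun u : ℝ => max u 0 ^ m) =ᶠ[𝓝 v] fun _ => 0 := by
      filter_upwards [Iio_mem_nhds hv] with w hw
      rw [max_eq_right hw.le, zero_pow (by omega)]
    rw [max_eq_right hv.le, zero_pow (by omega), mul_zero]
    exact (hasDerivAt_const v 0).congr_of_eventuallyEq hzero
  · have hpow : (fun u : ℝ => max u 0 ^ m) =ᶠ[𝓝 v] fun w => w ^ m := by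
      filter_upwards [Ioi_mem_nhds hv] with w hw
      rw [max_eq_left hw.le]
    rw [max_eq_left hv.le]
    exact (hasDerivAt_pow m v).congr_of_eventuallyEq hpow

lemma hasDerivAt_williamsonMoment [IsFiniteMeasure γ] (hγ : ∀ᵐ t ∂γ, 0 ≤ t) (k : ℕ)
    (hm : 2 ≤ m) (hz : 0 < z) :
    HasDerivAt (williamsonMoment γ k m) (-(m * williamsonMoment γ (k + 1) (m - 1) z)) z := by
  have hF' (t x : ℝ) : HasDerivAt (fun x => t ^ k * max (1 - t * x) 0 ^ m)
      (-(m * (t ^ (k + 1) * max (1 - t * x) 0 ^ (m - 1)))) x := by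
    refine (((hasDerivAt_max_zero_pow hm (1 - t * x)).comp x
      (((hasDerivAt_id x).const_mul t).const_sub 1)).const_mul (t ^ k)).congr_deriv ?_
    ring
  have hbound : ∀ᵐ t ∂γ, ∀ x ∈ Ioi (z / 2),
      ‖-(m * (t ^ (k + 1) * max (1 - t * x) 0 ^ (m - 1)))‖ ≤ m * (z / 2)⁻¹ ^ (k + 1) := by
    filter_upwards [hγ] with t ht x hx
    have hx0 : 0 < x := (half_pos hz).trans hx
    rw [norm_neg, Real.norm_of_nonneg (by positivity)]
    gcongr
    exact (pow_mul_max_one_sub_mul_pow_le ht hx0 (k + 1) (by omega)).trans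
      (pow_le_pow_left₀ (by positivity) (inv_anti₀ (half_pos hz) (le_of_lt hx)) _)
  have key := hasDerivAt_integral_of_dominated_loc_of_deriv_le (μ := γ) (x₀ := z)
    (Ioi_mem_nhds (half_lt_self hz))
    (Eventually.of_forall fun x => (by fun_prop : Continuous _).aestronglyMeasurable)
    (integrable_pow_mul_max_one_sub_mul_pow hγ k (by omega) hz)
    (by fun_prop : Continuous _).aestronglyMeasurable hbound (integrable_const _)
    (Eventually.of_forall fun t x _ => hF' t x)
  rw [integral_neg, integral_const_mul] at key
  exact key.2

lemma iterate_deriv_eq_williamsonMoment [IsFiniteMeasure γ] (hγ : ∀ᵐ t ∂γ, 0 ≤ t)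
    {k : ℕ} {f : ℝ → ℝ} (hf : EqOn f (williamsonMoment γ k m) (Ioi 0)) {j : ℕ} (hj : j < m)
    (hx : 0 < x) :
    deriv^[j] f x = (-1) ^ j * m.descFactorial j * williamsonMoment γ (k + j) (m - j) x := by
  induction j generalizing x with
  | zero => simpa using hf hx
  | succ j ih =>
    have hev : deriv^[j] f =ᶠ[𝓝 x]
        fun y => (-1) ^ j * m.descFactorial j * williamsonMoment γ (k + j) (m - j) y :=
      eventually_of_mem (Ioi_mem_nhds hx) fun y hy => ih (by omega) hy
    rw [Function.iterate_succ_apply', hev.deriv_eq,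
      ((hasDerivAt_williamsonMoment hγ (k + j) (by omega) hx).const_mul _).deriv,
      Nat.descFactorial_succ, Nat.cast_mul, Nat.cast_sub (by omega : j ≤ m),
      show m - j - 1 = m - (j + 1) by omega, ← add_assoc, pow_succ]
    ring

lemma abs_slope_pow_mul_max_one_sub_mul_le (ht : 0 ≤ t) (hx : 0 < x) (hxz : x < z) (k : ℕ) :
    |slope (fun x => t ^ k * max (1 - t * x) 0) z x| ≤ x⁻¹ ^ (k + 1) := by
  rw [slope_def_field]
  rcases le_or_gt 1 (t * x) with htx | htx
  · have htz : 1 ≤ t * z := htx.trans (by gcongr)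
    rw [max_eq_right (by linarith), max_eq_right (by linarith)]
    simp only [mul_zero, sub_self, zero_div, abs_zero]
    positivity
  · have hlip : |max (1 - t * x) 0 - max (1 - t * z) 0| ≤ t * (z - x) := by
      refine (abs_max_sub_max_le_abs _ _ _).trans (le_of_eq ?_)
      rw [show 1 - t * x - (1 - t * z) = t * (z - x) by ring, abs_of_nonneg (by nlinarith)]
    have htx' : t ≤ x⁻¹ := by
      rw [← one_div, le_div_iff₀ hx]
      exact htx.le
    calc |(t ^ k * max (1 - t * x) 0 - t ^ k * max (1 - t * z) 0) / (x - z)|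
        = t ^ k * |max (1 - t * x) 0 - max (1 - t * z) 0| / (z - x) := by
          rw [← mul_sub, abs_div, abs_mul, abs_of_nonneg (by positivity), abs_sub_comm x z,
            abs_of_pos (sub_pos.mpr hxz)]
      _ ≤ t ^ k * (t * (z - x)) / (z - x) := by gcongr
      _ = t ^ (k + 1) := by field_simp [(sub_pos.mpr hxz).ne']; ring
      _ ≤ x⁻¹ ^ (k + 1) := by gcongr

lemma tendsto_slope_pow_mul_max_one_sub_mul (ht : 0 ≤ t) (hz : 0 < z) (k : ℕ) :
    Tendsto (slope (fun x => t ^ k * max (1 - t * x) 0) z) (𝓝[<] z)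
      (𝓝 (-(Ioc 0 z⁻¹).indicator (fun t => t ^ (k + 1)) t)) := by
  by_cases hmem : t ∈ Ioc 0 z⁻¹
  · have htz : t * z ≤ 1 := by
      rw [← le_div_iff₀ hz, one_div]
      exact hmem.2
    rw [indicator_of_mem hmem]
    refine tendsto_const_nhds.congr' (eventually_nhdsWithin_of_forall fun x (hx : x < z) => ?_)
    have htx : t * x < 1 := lt_of_lt_of_le (by gcongr; exact hmem.1) htz
    rw [slope_def_field, max_eq_left (by linarith), max_eq_left (by linarith)]
    field_simp [(sub_neg.mpr hx).ne]
    ring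
  · rw [indicator_of_notMem hmem, neg_zero]
    have hconst : ∀ᶠ x in 𝓝[<] z, t ^ k * max (1 - t * x) 0 = t ^ k * max (1 - t * z) 0 := by
      rcases ht.eq_or_lt with rfl | ht
      · simp
      have htz : 1 < t * z := by
        rw [mem_Ioc, not_and, not_le, inv_lt_iff_one_lt_mul₀ hz] at hmem
        exact hmem ht
      filter_upwards [nhdsWithin_le_nhds (Ioi_mem_nhds (show t⁻¹ < z by
        rwa [inv_lt_iff_one_lt_mul₀' ht]))] with x hx
      have htx : 1 < t * x := by rwa [mem_Ioi, inv_lt_iff_one_lt_mul₀' ht] at hx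
      rw [max_eq_right (by linarith), max_eq_right (by linarith)]
    refine tendsto_const_nhds.congr' (hconst.mono fun x hx => ?_)
    rw [slope_def_field, hx, sub_self, zero_div]

lemma hasDerivWithinAt_williamsonMoment_one_Iio [IsFiniteMeasure γ] (hγ : ∀ᵐ t ∂γ, 0 ≤ t)
    (k : ℕ) (hz : 0 < z) :
    HasDerivWithinAt (williamsonMoment γ k 1) (-∫ t in Ioc 0 z⁻¹, t ^ (k + 1) ∂γ) (Iio z) z := by
  have hslope : ∀ x, 0 < x → slope (williamsonMoment γ k 1) z x =
      ∫ t, slope (fun x => t ^ k * max (1 - t * x) 0) z x ∂γ := by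
    intro x hx
    simp only [slope_def_module, williamsonMoment, pow_one]
    rw [← integral_sub, ← integral_smul]
    · simpa using integrable_pow_mul_max_one_sub_mul_pow hγ k one_ne_zero hx
    · simpa using integrable_pow_mul_max_one_sub_mul_pow hγ k one_ne_zero hz
  have hbound : ∀ᶠ x in 𝓝[<] z, ∀ᵐ t ∂γ,
      ‖slope (fun x => t ^ k * max (1 - t * x) 0) z x‖ ≤ (z / 2)⁻¹ ^ (k + 1) := by
    filter_upwards [Ioo_mem_nhdsLT (half_lt_self hz)] with x hx
    filter_upwards [hγ] with t ht
    exact (abs_slope_pow_mul_max_one_sub_mul_le ht ((half_pos hz).trans hx.1) hx.2 k).trans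
      (pow_le_pow_left₀ (inv_pos.mpr ((half_pos hz).trans hx.1)).le
        (inv_anti₀ (half_pos hz) hx.1.le) _)
  rw [hasDerivWithinAt_iff_tendsto_slope' (show z ∉ Iio z from lt_irrefl z),
    ← integral_indicator measurableSet_Ioc, ← integral_neg]
  refine (tendsto_integral_filter_of_dominated_convergence _
    (Eventually.of_forall fun x => ?_) hbound (integrable_const _)
    (hγ.mono fun t ht => tendsto_slope_pow_mul_max_one_sub_mul ht hz k)).congr' ?_
  · simp only [slope_def_field]
    exact (by fun_prop : Continuous _).aestronglyMeasurable
  · filter_upwards [Ioo_mem_nhdsLT (half_lt_self hz)] with x hx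
    exact (hslope x ((half_pos hz).trans hx.1)).symm

lemma leftDeriv_iterate_deriv_eq_of_eqOn_williamson [IsFiniteMeasure γ]
    (hγ : ∀ᵐ t ∂γ, 0 ≤ t) {d : ℕ} (hd : 2 ≤ d) {ψ : ℝ → ℝ}
    (hψ : EqOn ψ (williamson d γ) (Ioi 0)) (hz : 0 < z) :
    leftDeriv (deriv^[d - 2] ψ) z =
      -((-1) ^ (d - 2) * (d - 1).factorial * ∫ t in Ioc 0 z⁻¹, t ^ (d - 1) ∂γ) := by
  rw [williamson_eq_williamsonMoment] at hψ
  have hfactorial : ((d - 1).descFactorial (d - 2) : ℝ) = (d - 1).factorial := by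
    rw [← Nat.factorial_mul_descFactorial (by omega : d - 2 ≤ d - 1),
      show d - 1 - (d - 2) = 1 by omega, Nat.factorial_one, one_mul]
  have hiter : deriv^[d - 2] ψ =ᶠ[𝓝 z]
      fun x => (-1) ^ (d - 2) * (d - 1).factorial * williamsonMoment γ (d - 2) 1 x := by
    filter_upwards [Ioi_mem_nhds hz] with x hx
    rw [iterate_deriv_eq_williamsonMoment hγ hψ (by omega) hx, zero_add, hfactorial,
      show d - 1 - (d - 2) = 1 by omega]
  have := (((hasDerivWithinAt_williamsonMoment_one_Iio hγ (d - 2) hz).const_mul _)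
    |>.congr_of_eventuallyEq (nhdsWithin_le_nhds hiter) hiter.eq_of_nhds).derivWithin
    (uniqueDiffWithinAt_Iio z)
  rw [leftDeriv, this, show d - 2 + 1 = d - 1 by omega]
  ring

end WilliamsonMoment

theorem leftDeriv_eq_williamson_integral_general
    (d : ℕ) (hd : 3 ≤ d) (ψ : ℝ → ℝ)
    (γ : Measure ℝ) (hprob : IsProbabilityMeasure γ)
    (hneg : γ (Iio 0) = 0)
    (hW : ∀ z : ℝ, 0 < z → ψ z = williamson d γ z) :
    ∀ z : ℝ, 0 < z →
      (-1 : ℝ) ^ (d - 2) * leftDeriv (deriv^[d - 2] ψ) z =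
        -(Nat.factorial (d - 1)) * ∫ t in Ioc (0 : ℝ) (1 / z), t ^ (d - 1) ∂γ ∧
      0 ≤ (-1 : ℝ) ^ (d - 1) * leftDeriv (deriv^[d - 2] ψ) z := by
  intro z hz
  have hγ : ∀ᵐ t ∂γ, 0 ≤ t := by
    rwa [ae_iff, show {t : ℝ | ¬0 ≤ t} = Iio 0 by ext; simp]
  have hleft := leftDeriv_iterate_deriv_eq_of_eqOn_williamson hγ (by omega) hW hz
  rw [← one_div] at hleft
  set S := ∫ t in Ioc (0 : ℝ) (1 / z), t ^ (d - 1) ∂γ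
  have hsign : (-1 : ℝ) ^ (d - 2) * (-1) ^ (d - 2) = 1 := by rw [← mul_pow]; norm_num
  have hpow : (-1 : ℝ) ^ (d - 1) = -(-1) ^ (d - 2) := by
    rw [show d - 1 = d - 2 + 1 by omega, pow_succ, mul_neg_one]
  refine ⟨?_, ?_⟩
  · rw [hleft]
    linear_combination (-(d - 1).factorial * S : ℝ) * hsign
  · have hS : 0 ≤ S := setIntegral_nonneg measurableSet_Ioc fun t ht => pow_nonneg ht.1.le _
    calc (0 : ℝ) ≤ (d - 1).factorial * S := by positivity
      _ = _ := by
        rw [hpow, hleft]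
        linear_combination (-(d - 1).factorial * S : ℝ) * hsign

/-- If `ψ` is a `d`-monotone generator with Williamson measure `γ`,
then for every `z > 0`:
`(-1)^(d-2) D⁻ψ^(d-2)(z) = -(d-1)! ∫_{(0,1/z]} t^(d-1) dγ(t)`,
and in particular `(-1)^(d-1) D⁻ψ^(d-2)(z) ≥ 0`. -/
theorem leftDeriv_eq_williamson_integral
    (d : ℕ) (hd : 3 ≤ d) (ψ : ℝ → ℝ) (hψ : IsdMonotoneGenerator d ψ)
    (γ : Measure ℝ) (hprob : IsProbabilityMeasure γ)
    (hneg : γ (Iio 0) = 0) (h0 : γ {0} = 0)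
    (hW : ∀ z : ℝ, 0 < z → ψ z = williamson d γ z) :
    ∀ z : ℝ, 0 < z →
      (-1 : ℝ) ^ (d - 2) * leftDeriv (deriv^[d - 2] ψ) z =
        -(Nat.factorial (d - 1)) * ∫ t in Ioc (0 : ℝ) (1 / z), t ^ (d - 1) ∂γ ∧
      0 ≤ (-1 : ℝ) ^ (d - 1) * leftDeriv (deriv^[d - 2] ψ) z :=
  leftDeriv_eq_williamson_integral_general d hd ψ γ hprob hneg hW
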